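/- arXiv:1909.03932 — 2 statements merged into one kernel-verified Lean document; each statement's English description precedes it below -/
import Mathlib

section
/- Let Σ be a real symmetric positive definite n×n matrix and let 1 ≤ r ≤ n. For every real symmetric positive semidefinite n×n matrix Ω with rank(Ω) ≤ r, Σ − Ω positive semidefinite, and Σ − Ω diagonal, and for every Λ ∈ S_0^n, the following weak duality inequality holds: ‖Σ − Ω‖_F² ≥ −‖Σ + Λ‖_r² + 2⟨Λ, Σ⟩ + ‖Σ‖_F². -/
open Matrix

/-- The `k`-th largest singular value (1-indexed) of a real square matrix,
with junk value `0` when `k` is out of range. -/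
noncomputable def sv {n : ℕ} (A : Matrix (Fin n) (Fin n) ℝ) (k : ℕ) : ℝ :=
  if h : k - 1 < n then
    (fun i => Real.sqrt ((Matrix.isHermitian_iff_isSymm.mpr (Matrix.isSymm_transpose_mul_self A)).eigenvalues i))
      (Tuple.sort (fun i : Fin n =>
        Real.sqrt ((Matrix.isHermitian_iff_isSymm.mpr (Matrix.isSymm_transpose_mul_self A)).eigenvalues i))
        (Fin.rev ⟨k - 1, h⟩))
  else 0

/-- Operator (spectral) norm: the largest singular value. -/
noncomputable def opNorm {n : ℕ} (A : Matrix (Fin n) (Fin n) ℝ) : ℝ := sv A 1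

/-- Frobenius norm. -/
noncomputable def frobNorm {n : ℕ} (A : Matrix (Fin n) (Fin n) ℝ) : ℝ :=
  Real.sqrt (∑ i, ∑ j, (A i j) ^ 2)

/-- The `r`-norm: square root of the sum of squares of the `r` largest singular values. -/
noncomputable def rNorm {n : ℕ} (A : Matrix (Fin n) (Fin n) ℝ) (r : ℕ) : ℝ :=
  Real.sqrt (∑ k ∈ Finset.range r, (sv A (k + 1)) ^ 2)

/-- Frobenius (trace) inner product of square matrices. -/
noncomputable def minner {n : ℕ} (A B : Matrix (Fin n) (Fin n) ℝ) : ℝ :=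
  (Aᵀ * B).trace

/-- The ranges (column spaces) of `A` and `B` are orthogonal. -/
def rangesOrth {n : ℕ} (A B : Matrix (Fin n) (Fin n) ℝ) : Prop :=
  ∀ x y : Fin n → ℝ, (A.mulVec x) ⬝ᵥ (B.mulVec y) = 0

/-! Diagonalise `Ω = V diag(λ) Vᵀ` with `V` orthogonal; at most `r` of the `λᵢ` are nonzero. Then
`⟨M, Ω⟩ = ∑ᵢ λᵢ (VᵀMV)ᵢᵢ`, and Cauchy–Schwarz over the nonzero `λᵢ` bounds this by
`‖Ω‖_F · (∑ᵢ (VᵀMV)ᵢᵢ²)^½`. Each `(VᵀMV)ᵢᵢ²` is at most `(Vᵀ MᵀM V)ᵢᵢ`, and by Ky Fan's maximum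
principle a sum of at most `r` diagonal entries of `Vᵀ MᵀM V` is at most the sum of the `r` largest
eigenvalues of `MᵀM`, which is `‖M‖_r²`. Hence `⟨M, Ω⟩ ≤ ‖M‖_r ‖Ω‖_F`.

Weak duality follows: `⟨Λ, Σ - Ω⟩ = 0` since `Λ` has zero diagonal and `Σ - Ω` is diagonal, so after
expanding `‖Σ - Ω‖_F²` the claim becomes `2 ⟨Σ + Λ, Ω⟩ ≤ ‖Σ + Λ‖_r² + ‖Ω‖_F²`, i.e. the bound above
and AM–GM. -/

open Finset

def IsTopSet {ι : Type*} (e : ι → ℝ) (T : Finset ι) : Prop :=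
  ∀ i ∈ T, ∀ j ∉ T, e j ≤ e i

lemma sum_mul_le_sum_of_isTopSet {ι : Type*} [Fintype ι] {e c : ι → ℝ} {T : Finset ι}
    (hT : IsTopSet e T) (he : 0 ≤ e) (hc₀ : 0 ≤ c) (hc₁ : c ≤ 1) (hc : ∑ j, c j ≤ #T) :
    ∑ j, e j * c j ≤ ∑ i ∈ T, e i := by
  classical
  rcases T.eq_empty_or_nonempty with rfl | hne
  · have : ∀ j ∈ univ, c j = 0 := (sum_eq_zero_iff_of_nonneg fun j _ => hc₀ j).mp
      (le_antisymm (by simpa using hc) (sum_nonneg fun j _ => hc₀ j))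
    simp [this]
  -- `min_T e` separates the values of `e` on `T` from those off `T`.
  obtain ⟨i₀, hi₀, hmin⟩ := T.exists_min_image e hne
  have hout : ∑ j ∈ Tᶜ, e j * c j ≤ e i₀ * ∑ j ∈ Tᶜ, c j := by
    rw [mul_sum]
    exact sum_le_sum fun j hj => mul_le_mul_of_nonneg_right
      (hT i₀ hi₀ j (mem_compl.mp hj)) (hc₀ j)
  have hmass : e i₀ * ∑ j ∈ Tᶜ, c j ≤ e i₀ * ∑ i ∈ T, (1 - c i) := by
    refine mul_le_mul_of_nonneg_left ?_ (he i₀)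
    rw [sum_sub_distrib, sum_const, nsmul_one]
    linarith [sum_compl_add_sum T c]
  have hin : e i₀ * ∑ i ∈ T, (1 - c i) ≤ ∑ i ∈ T, e i * (1 - c i) := by
    rw [mul_sum]
    exact sum_le_sum fun i hi => mul_le_mul_of_nonneg_right (hmin i hi) (sub_nonneg.mpr (hc₁ i))
  calc ∑ j, e j * c j = ∑ j ∈ Tᶜ, e j * c j + ∑ i ∈ T, e i * c i := (sum_compl_add_sum T _).symm
    _ ≤ ∑ i ∈ T, e i * (1 - c i) + ∑ i ∈ T, e i * c i := by linarith
    _ = ∑ i ∈ T, e i := by rw [← sum_add_distrib]; exact sum_congr rfl fun i _ => by ring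

namespace Matrix

variable {ι : Type*} [Fintype ι] [DecidableEq ι]

lemma IsHermitian.transpose_eigenvectorUnitary_mul_self {A : Matrix ι ι ℝ} (hA : A.IsHermitian) :
    (hA.eigenvectorUnitary : Matrix ι ι ℝ)ᵀ * hA.eigenvectorUnitary = 1 := by
  simpa [star_eq_conjTranspose] using Unitary.coe_star_mul_self hA.eigenvectorUnitary

lemma IsHermitian.eq_eigenvectorUnitary_mul_diagonal_mul {A : Matrix ι ι ℝ} (hA : A.IsHermitian) :
    A = hA.eigenvectorUnitary * diagonal hA.eigenvalues *
      (hA.eigenvectorUnitary : Matrix ι ι ℝ)ᵀ := by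
  conv_lhs => rw [hA.spectral_theorem]
  simp [star_eq_conjTranspose]

lemma IsHermitian.transpose_eigenvectorUnitary_mul_mul {A : Matrix ι ι ℝ} (hA : A.IsHermitian) :
    (hA.eigenvectorUnitary : Matrix ι ι ℝ)ᵀ * A * hA.eigenvectorUnitary =
      diagonal hA.eigenvalues := by
  simpa [star_eq_conjTranspose] using hA.conjStarAlgAut_star_eigenvectorUnitary

lemma transpose_mul_diagonal_mul_apply_self (P : Matrix ι ι ℝ) (e : ι → ℝ) (i : ι) :
    (Pᵀ * diagonal e * P) i i = ∑ l, e l * P l i ^ 2 := by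
  rw [mul_apply]
  simp_rw [mul_diagonal, transpose_apply]
  exact sum_congr rfl fun l _ => by ring

variable {V : Matrix ι ι ℝ}

lemma sum_sq_apply_left_eq_one (hV : Vᵀ * V = 1) (i : ι) : ∑ l, V l i ^ 2 = 1 := by
  simpa [mul_apply, sq] using congr($hV i i)

lemma sum_sq_apply_right_eq_one (hV : Vᵀ * V = 1) (l : ι) : ∑ i, V l i ^ 2 = 1 := by
  simpa [mul_apply, sq] using congr($(mul_eq_one_comm.mp hV) l l)

lemma sq_transpose_mul_mul_apply_self_le (hV : Vᵀ * V = 1) (M : Matrix ι ι ℝ) (i : ι) :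
    (Vᵀ * M * V) i i ^ 2 ≤ (Vᵀ * (Mᵀ * M) * V) i i := by
  have hleft : (Vᵀ * M * V) i i = ∑ j, V j i * (M * V) j i := by
    rw [Matrix.mul_assoc, mul_apply]
    rfl
  have hright : (Vᵀ * (Mᵀ * M) * V) i i = ∑ j, (M * V) j i ^ 2 := by
    rw [show Vᵀ * (Mᵀ * M) * V = (M * V)ᵀ * (M * V) by simp [transpose_mul, Matrix.mul_assoc],
      mul_apply]
    simp [sq]
  rw [hleft, hright]
  simpa [sum_sq_apply_left_eq_one hV] using
    sum_mul_sq_le_sq_mul_sq univ (fun j => V j i) (fun j => (M * V) j i)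

-- One half of Ky Fan's maximum principle.
lemma sum_transpose_mul_mul_apply_self_le {G : Matrix ι ι ℝ} (hG : G.PosSemidef)
    (hV : Vᵀ * V = 1) {S T : Finset ι} (hST : #S ≤ #T) (hT : IsTopSet hG.1.eigenvalues T) :
    ∑ i ∈ S, (Vᵀ * G * V) i i ≤ ∑ l ∈ T, hG.1.eigenvalues l := by
  set W : Matrix ι ι ℝ := (hG.1.eigenvectorUnitary : Matrix ι ι ℝ)
  set P := Wᵀ * V
  have hP : Pᵀ * P = 1 := by
    have hW : W * Wᵀ = 1 := mul_eq_one_comm.mp hG.1.transpose_eigenvectorUnitary_mul_self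
    simp only [P, transpose_mul, transpose_transpose, Matrix.mul_assoc, ← Matrix.mul_assoc W, hW,
      Matrix.one_mul, hV]
  have hconj : Vᵀ * G * V = Pᵀ * diagonal hG.1.eigenvalues * P := by
    conv_lhs => rw [hG.1.eq_eigenvectorUnitary_mul_diagonal_mul]
    simp only [P, W, transpose_mul, transpose_transpose, Matrix.mul_assoc]
  calc ∑ i ∈ S, (Vᵀ * G * V) i i
      = ∑ l, hG.1.eigenvalues l * ∑ i ∈ S, P l i ^ 2 := by
        simp only [hconj, transpose_mul_diagonal_mul_apply_self, mul_sum]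
        exact sum_comm
    _ ≤ ∑ l ∈ T, hG.1.eigenvalues l := by
      refine sum_mul_le_sum_of_isTopSet hT hG.eigenvalues_nonneg
        (fun l => sum_nonneg fun i _ => sq_nonneg _) (fun l => ?_) ?_
      · calc ∑ i ∈ S, P l i ^ 2 ≤ ∑ i, P l i ^ 2 :=
              sum_le_sum_of_subset_of_nonneg (subset_univ S) fun i _ _ => sq_nonneg _
          _ = 1 := sum_sq_apply_right_eq_one hP l
      · rw [sum_comm]
        simp only [sum_sq_apply_left_eq_one hP, sum_const, nsmul_one]
        exact_mod_cast hST

end Matrix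

section FrobeniusInner

variable {n : ℕ}

lemma minner_eq_sum (A B : Matrix (Fin n) (Fin n) ℝ) :
    minner A B = ∑ i, ∑ j, A i j * B i j := by
  simp only [minner, trace, Matrix.diag, mul_apply, transpose_apply]
  exact sum_comm

lemma minner_comm (A B : Matrix (Fin n) (Fin n) ℝ) : minner A B = minner B A := by
  simp only [minner_eq_sum, mul_comm]

lemma minner_add_left (A B C : Matrix (Fin n) (Fin n) ℝ) :
    minner (A + B) C = minner A C + minner B C := by
  simp [minner, Matrix.add_mul]

lemma minner_sub_right (A B C : Matrix (Fin n) (Fin n) ℝ) :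
    minner A (B - C) = minner A B - minner A C := by
  simp [minner, Matrix.mul_sub]

lemma minner_eq_zero_of_isDiag {A B : Matrix (Fin n) (Fin n) ℝ} (hA : ∀ i, A i i = 0)
    (hB : B.IsDiag) : minner A B = 0 := by
  rw [minner_eq_sum]
  refine sum_eq_zero fun i _ => sum_eq_zero fun j _ => ?_
  rcases eq_or_ne i j with rfl | hij
  · rw [hA, zero_mul]
  · rw [hB hij, mul_zero]

lemma frobNorm_nonneg (A : Matrix (Fin n) (Fin n) ℝ) : 0 ≤ frobNorm A := Real.sqrt_nonneg _

lemma sq_frobNorm (A : Matrix (Fin n) (Fin n) ℝ) : frobNorm A ^ 2 = minner A A := by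
  rw [frobNorm, Real.sq_sqrt (by positivity), minner_eq_sum]
  simp only [sq]

lemma sq_frobNorm_sub (A B : Matrix (Fin n) (Fin n) ℝ) :
    frobNorm (A - B) ^ 2 = frobNorm A ^ 2 - 2 * minner A B + frobNorm B ^ 2 := by
  rw [sq_frobNorm, sq_frobNorm, sq_frobNorm, minner_sub_right, minner_comm (A - B),
    minner_comm (A - B), minner_sub_right, minner_sub_right, minner_comm B A]
  ring

lemma minner_eq_sum_eigenvalues_mul (M : Matrix (Fin n) (Fin n) ℝ)
    {Ω : Matrix (Fin n) (Fin n) ℝ} (hΩ : Ω.IsHermitian) :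
    minner M Ω = ∑ i, hΩ.eigenvalues i *
      ((hΩ.eigenvectorUnitary : Matrix (Fin n) (Fin n) ℝ)ᵀ * M * hΩ.eigenvectorUnitary) i i := by
  set V : Matrix (Fin n) (Fin n) ℝ := (hΩ.eigenvectorUnitary : Matrix (Fin n) (Fin n) ℝ)
  have hMV : Vᵀ * Mᵀ * V = (Vᵀ * M * V)ᵀ := by simp [transpose_mul, Matrix.mul_assoc]
  conv_lhs => rw [minner, hΩ.eq_eigenvectorUnitary_mul_diagonal_mul, ← Matrix.mul_assoc Mᵀ,
    trace_mul_cycle, ← Matrix.mul_assoc, hMV]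
  simp only [trace, Matrix.diag, mul_diagonal, transpose_apply, mul_comm]

lemma sq_frobNorm_eq_sum_sq_eigenvalues {Ω : Matrix (Fin n) (Fin n) ℝ} (hΩ : Ω.IsHermitian) :
    frobNorm Ω ^ 2 = ∑ i, hΩ.eigenvalues i ^ 2 := by
  rw [sq_frobNorm, minner_eq_sum_eigenvalues_mul Ω hΩ, hΩ.transpose_eigenvectorUnitary_mul_mul]
  simp [sq]

end FrobeniusInner

section SingularValues

variable {n : ℕ} (M : Matrix (Fin n) (Fin n) ℝ)

lemma rNorm_nonneg (r : ℕ) : 0 ≤ rNorm M r := Real.sqrt_nonneg _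

lemma sv_succ_of_lt (hA : (Mᵀ * M).IsHermitian) {k : ℕ} (hk : k < n) :
    sv M (k + 1) =
      √(hA.eigenvalues (Tuple.sort (fun i => √(hA.eigenvalues i)) (Fin.rev ⟨k, hk⟩))) := by
  rw [sv, dif_pos (by omega)]
  rfl

lemma sv_succ_of_le {k : ℕ} (hk : n ≤ k) : sv M (k + 1) = 0 := by
  rw [sv, dif_neg (by omega)]

lemma exists_isTopSet_sum_eigenvalues_eq_sq_rNorm (hA : (Mᵀ * M).IsHermitian) (r : ℕ) :
    ∃ T : Finset (Fin n), #T = min r n ∧ IsTopSet hA.eigenvalues T ∧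
      ∑ l ∈ T, hA.eigenvalues l = rNorm M r ^ 2 := by
  have hpsd : (Mᵀ * M).PosSemidef := by simpa using posSemidef_conjTranspose_mul_self M
  set σ := Tuple.sort (fun i => √(hA.eigenvalues i))
  set m := min r n
  -- the positions of the `m` largest singular values
  set f : Fin m → Fin n := fun k => σ (Fin.rev (Fin.castLE (min_le_right r n) k))
  have hf : Function.Injective f := fun a b h => by
    simpa [f, Fin.castLE_inj, Fin.rev_inj] using h
  refine ⟨univ.image f, by rw [card_image_of_injective _ hf, card_univ, Fintype.card_fin], ?_, ?_⟩
  · simp only [IsTopSet, mem_image, mem_univ, true_and]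
    rintro _ ⟨k, rfl⟩ j hj
    have hle : σ.symm j ≤ Fin.rev (Fin.castLE (min_le_right r n) k) := by
      by_contra! hgt
      have hrev : ((σ.symm j).rev : ℕ) < m := by
        have := Fin.lt_def.mp hgt
        simp only [Fin.val_rev, Fin.val_castLE] at this ⊢
        omega
      refine hj ⟨⟨_, hrev⟩, ?_⟩
      change σ (Fin.rev ⟨(σ.symm j).rev, _⟩) = j
      rw [Fin.eta, Fin.rev_rev, Equiv.apply_symm_apply]
    have := Tuple.monotone_sort (fun i => √(hA.eigenvalues i)) hle
    change √(hA.eigenvalues (σ (σ.symm j))) ≤ √(hA.eigenvalues (f k)) at this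
    rw [Equiv.apply_symm_apply] at this
    exact (Real.sqrt_le_sqrt_iff (hpsd.eigenvalues_nonneg _)).mp this
  · have hsv : ∀ k : Fin m, hA.eigenvalues (f k) = sv M (k + 1) ^ 2 := fun k => by
      rw [sv_succ_of_lt M hA (by omega), Real.sq_sqrt (hpsd.eigenvalues_nonneg _)]
      rfl
    rw [sum_image fun a _ b _ h => hf h, rNorm, Real.sq_sqrt (by positivity)]
    simp only [hsv]
    rw [Fin.sum_univ_eq_sum_range (fun k => sv M (k + 1) ^ 2)]
    refine sum_subset (range_subset_range.mpr (min_le_left r n)) fun k hkr hkm => ?_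
    rw [sv_succ_of_le M (by simp [m] at hkr hkm; omega), sq, zero_mul]

end SingularValues

lemma minner_le_rNorm_mul_frobNorm {n r : ℕ} (M : Matrix (Fin n) (Fin n) ℝ)
    {Ω : Matrix (Fin n) (Fin n) ℝ} (hΩ : Ω.IsHermitian) (hΩr : Ω.rank ≤ r) :
    minner M Ω ≤ rNorm M r * frobNorm Ω := by
  set V : Matrix (Fin n) (Fin n) ℝ := (hΩ.eigenvectorUnitary : Matrix (Fin n) (Fin n) ℝ)
  have hV : Vᵀ * V = 1 := hΩ.transpose_eigenvectorUnitary_mul_self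
  set S := univ.filter fun i => hΩ.eigenvalues i ≠ 0
  have hG : (Mᵀ * M).PosSemidef := by simpa using posSemidef_conjTranspose_mul_self M
  obtain ⟨T, hT, htop, hsum⟩ := exists_isTopSet_sum_eigenvalues_eq_sq_rNorm M hG.1 r
  have hST : #S ≤ #T := by
    rw [hT, ← Fintype.card_subtype, ← hΩ.rank_eq_card_non_zero_eigs]
    exact le_min hΩr ((rank_le_card_width Ω).trans_eq (Fintype.card_fin n))
  have heig : √(∑ i ∈ S, hΩ.eigenvalues i ^ 2) ≤ frobNorm Ω := by
    refine (Real.sqrt_le_left (frobNorm_nonneg Ω)).mpr ?_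
    rw [sq_frobNorm_eq_sum_sq_eigenvalues hΩ]
    exact sum_le_sum_of_subset_of_nonneg (subset_univ S) fun i _ _ => sq_nonneg _
  have hdiag : √(∑ i ∈ S, (Vᵀ * M * V) i i ^ 2) ≤ rNorm M r := by
    refine (Real.sqrt_le_left (rNorm_nonneg M r)).mpr ?_
    calc ∑ i ∈ S, (Vᵀ * M * V) i i ^ 2 ≤ ∑ i ∈ S, (Vᵀ * (Mᵀ * M) * V) i i :=
          sum_le_sum fun i _ => sq_transpose_mul_mul_apply_self_le hV M i
      _ ≤ ∑ l ∈ T, hG.1.eigenvalues l := sum_transpose_mul_mul_apply_self_le hG hV hST htop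
      _ = rNorm M r ^ 2 := hsum
  calc minner M Ω = ∑ i ∈ S, hΩ.eigenvalues i * (Vᵀ * M * V) i i := by
        rw [minner_eq_sum_eigenvalues_mul M hΩ,
          sum_filter_of_ne fun i _ h => left_ne_zero_of_mul h]
    _ ≤ √(∑ i ∈ S, hΩ.eigenvalues i ^ 2) * √(∑ i ∈ S, (Vᵀ * M * V) i i ^ 2) :=
        Real.sum_mul_le_sqrt_mul_sqrt _ _ _
    _ ≤ frobNorm Ω * rNorm M r := mul_le_mul heig hdiag (Real.sqrt_nonneg _) (frobNorm_nonneg Ω)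
    _ = rNorm M r * frobNorm Ω := mul_comm _ _

theorem stmt2_general {n r : ℕ}
    (Sg : Matrix (Fin n) (Fin n) ℝ)
    (Ω : Matrix (Fin n) (Fin n) ℝ) (hΩ : Ω.PosSemidef) (hΩr : Ω.rank ≤ r)
    (hSOd : (Sg - Ω).IsDiag)
    (Λ : Matrix (Fin n) (Fin n) ℝ) (hΛ0 : ∀ i, Λ i i = 0) :
    (frobNorm (Sg - Ω)) ^ 2 ≥
      -(rNorm (Sg + Λ) r) ^ 2 + 2 * minner Λ Sg + (frobNorm Sg) ^ 2 := by
  have hkey := minner_le_rNorm_mul_frobNorm (Sg + Λ) hΩ.1 hΩr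
  rw [minner_add_left] at hkey
  have hΛ : minner Λ Sg = minner Λ Ω := by
    have := minner_eq_zero_of_isDiag hΛ0 hSOd
    rw [minner_sub_right] at this
    linarith
  rw [sq_frobNorm_sub, hΛ]
  nlinarith [sq_nonneg (rNorm (Sg + Λ) r - frobNorm Ω)]

/-- Weak duality for the reformulated Frisch–Kalman problem. -/
theorem stmt2 {n r : ℕ} (hr1 : 1 ≤ r) (hrn : r ≤ n)
    (Sg : Matrix (Fin n) (Fin n) ℝ) (hSg : Sg.PosDef)
    (Ω : Matrix (Fin n) (Fin n) ℝ) (hΩ : Ω.PosSemidef) (hΩr : Ω.rank ≤ r)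
    (hSO : (Sg - Ω).PosSemidef) (hSOd : (Sg - Ω).IsDiag)
    (Λ : Matrix (Fin n) (Fin n) ℝ) (hΛ : Λ.IsSymm) (hΛ0 : ∀ i, Λ i i = 0) :
    (frobNorm (Sg - Ω)) ^ 2 ≥
      -(rNorm (Sg + Λ) r) ^ 2 + 2 * minner Λ Sg + (frobNorm Sg) ^ 2 :=
  stmt2_general Sg Ω hΩ hΩr hSOd Λ hΛ0
end

section
/- Let v = (4, 2, 1)ᵀ ∈ ℝ³ and Ω̂ = v vᵀ, a rank-1 positive semidefinite 3×3 matrix. Then for every vector d ∈ ℝ³ there exists a unique real symmetric 3×3 matrix M such that M v = 0 (equivalently, range(M) ⊆ ker(Ω̂)) and the diagonal of M equals d (i.e., M_{ii} = d_i for i = 1,2,3). In particular, for every diagonal 3×3 matrix Δ there exists Λ ∈ S_0^3 such that range(Δ + Λ) is orthogonal to range(Ω̂). -/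
/-!
For a symmetric `M` with off-diagonal entries `a, b, c`, the equation `M v = 0` with prescribed
diagonal is a linear system in `(a, b, c)` of determinant `-2 v₀ v₁ v₂`, so when no entry of `v`
vanishes the diagonal determines `M`. Since `M` is symmetric, `M v = 0` also says that the range of
`M` is orthogonal to `v`, which spans the range of `v vᵀ`.
-/

open Matrix

theorem rangesOrth_vecMulVec_self_of_isSymm {n : ℕ} {M : Matrix (Fin n) (Fin n) ℝ}
    {v : Fin n → ℝ} (hM : M.IsSymm) (hMv : M *ᵥ v = 0) : rangesOrth M (vecMulVec v v) := by
  intro x y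
  have hMx_v : M *ᵥ x ⬝ᵥ v = 0 := by
    rw [dotProduct_comm, dotProduct_mulVec, ← mulVec_transpose, hM.eq, hMv, zero_dotProduct]
  rw [vecMulVec_mulVec, op_smul_eq_smul, dotProduct_smul, hMx_v, smul_zero]

theorem Matrix.IsDiag.isSymm_sub_and_diag_eq_zero {n : Type*} {Δ M : Matrix n n ℝ}
    (hΔ : Δ.IsDiag) (hM : M.IsSymm) (hdiag : ∀ i, M i i = Δ i i) :
    (M - Δ).IsSymm ∧ ∀ i, (M - Δ) i i = 0 :=
  ⟨hM.sub hΔ.isSymm, fun i => by rw [Matrix.sub_apply, hdiag, sub_self]⟩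

section Dim3

variable {v : Fin 3 → ℝ}

/- Multiplying row `i` of `M v = 0` by `v i` gives, for `P i j = v i * v j * M i j` and
`s i = v i ^ 2 * d i`, the equations `P i j + P i k = -s i`; hence `2 P i j = s k - s i - s j`. -/
noncomputable def kerCompletion (v d : Fin 3 → ℝ) : Matrix (Fin 3) (Fin 3) ℝ :=
  of fun i j => if i = j then d i else
    ((∑ k, v k ^ 2 * d k) - 2 * (v i ^ 2 * d i + v j ^ 2 * d j)) / (2 * v i * v j)

theorem kerCompletion_isSymm (v d : Fin 3 → ℝ) : (kerCompletion v d).IsSymm := by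
  ext i j
  simp only [transpose_apply, kerCompletion, of_apply, eq_comm (a := j)]
  split_ifs with h
  · rw [h]
  · ring_nf

theorem kerCompletion_apply_self (v d : Fin 3 → ℝ) (i : Fin 3) : kerCompletion v d i i = d i := by
  simp [kerCompletion]

theorem kerCompletion_mulVec (hv : ∀ i, v i ≠ 0) (d : Fin 3 → ℝ) :
    kerCompletion v d *ᵥ v = 0 := by
  have := hv 0; have := hv 1; have := hv 2
  ext i
  fin_cases i <;>
    simp [kerCompletion, mulVec, dotProduct, Fin.sum_univ_three] <;> field_simp <;> ring

theorem eq_zero_of_isSymm_of_diag_eq_zero_of_mulVec_eq_zero (hv : ∀ i, v i ≠ 0)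
    {N : Matrix (Fin 3) (Fin 3) ℝ} (hN : N.IsSymm) (hdiag : ∀ i, N i i = 0)
    (hNv : N *ᵥ v = 0) : N = 0 := by
  have e0 := congrFun hNv 0
  have e1 := congrFun hNv 1
  have e2 := congrFun hNv 2
  simp only [mulVec, dotProduct, Fin.sum_univ_three, Pi.zero_apply, hdiag, zero_mul,
    zero_add, add_zero, hN.apply 0 1, hN.apply 0 2, hN.apply 1 2] at e0 e1 e2
  have h01 : v 0 * v 1 * N 0 1 = 0 := by
    linear_combination (v 0 * e0 + v 1 * e1 - v 2 * e2) / 2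
  have h02 : v 0 * v 2 * N 0 2 = 0 := by
    linear_combination (v 0 * e0 - v 1 * e1 + v 2 * e2) / 2
  have h12 : v 1 * v 2 * N 1 2 = 0 := by
    linear_combination (-v 0 * e0 + v 1 * e1 + v 2 * e2) / 2
  simp only [mul_eq_zero, hv, false_or] at h01 h02 h12
  ext i j
  fin_cases i <;> fin_cases j <;>
    simp [hdiag, h01, h02, h12, hN.apply 0 1, hN.apply 0 2, hN.apply 1 2]

theorem existsUnique_isSymm_mulVec_eq_zero_diag_eq (hv : ∀ i, v i ≠ 0) (d : Fin 3 → ℝ) :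
    ∃! M : Matrix (Fin 3) (Fin 3) ℝ, M.IsSymm ∧ M *ᵥ v = 0 ∧ ∀ i, M i i = d i := by
  refine ⟨kerCompletion v d,
    ⟨kerCompletion_isSymm v d, kerCompletion_mulVec hv d, kerCompletion_apply_self v d⟩, ?_⟩
  rintro M ⟨hM, hMv, hMd⟩
  rw [← sub_eq_zero]
  refine eq_zero_of_isSymm_of_diag_eq_zero_of_mulVec_eq_zero hv
    (hM.sub (kerCompletion_isSymm v d)) (fun i => ?_) ?_
  · rw [Matrix.sub_apply, hMd, kerCompletion_apply_self, sub_self]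
  · rw [sub_mulVec, hMv, kerCompletion_mulVec hv, sub_zero]

end Dim3

/-- For `v = (4,2,1)ᵀ` and `Ωh = vvᵀ`, every prescribed diagonal `d`
is achieved by a unique symmetric `3×3` matrix `M` with `Mv = 0`; in particular,
for every diagonal `Δ` there is `Λ ∈ S_0^3` with `range(Δ + Λ)` orthogonal to
`range(Ωh)`. -/
theorem stmt14 (v : Fin 3 → ℝ) (hv : v = ![4, 2, 1]) :
    (∀ d : Fin 3 → ℝ, ∃! M : Matrix (Fin 3) (Fin 3) ℝ,
      M.IsSymm ∧ M.mulVec v = 0 ∧ ∀ i, M i i = d i) ∧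
    (∀ Δ : Matrix (Fin 3) (Fin 3) ℝ, Δ.IsDiag →
      ∃ Λ : Matrix (Fin 3) (Fin 3) ℝ, Λ.IsSymm ∧ (∀ i, Λ i i = 0) ∧
        rangesOrth (Δ + Λ) (Matrix.vecMulVec v v)) := by
  subst hv
  have hv_ne : ∀ i, ![(4 : ℝ), 2, 1] i ≠ 0 := by
    intro i; fin_cases i <;> norm_num
  refine ⟨existsUnique_isSymm_mulVec_eq_zero_diag_eq hv_ne, fun Δ hΔ => ?_⟩
  obtain ⟨M, ⟨hM, hMv, hMd⟩, -⟩ :=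
    existsUnique_isSymm_mulVec_eq_zero_diag_eq hv_ne (fun i => Δ i i)
  obtain ⟨hsymm, hdiag⟩ := hΔ.isSymm_sub_and_diag_eq_zero hM hMd
  refine ⟨M - Δ, hsymm, hdiag, ?_⟩
  rw [add_sub_cancel]
  exact rangesOrth_vecMulVec_self_of_isSymm hM hMv
end
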